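/- On a closed Riemannian manifold $(M^n,g)$ with Schouten tensor $P$, Newton tensor $T^{ij} = \sigma_2(g)\,g^{ij} - \sigma_1(g)\,P^{ij} + (P^2)^{ij}$, and Cotton tensor $C$, the divergence satisfies $T^{ij}{}_{,j} = C^{kij}P_{kj} + \nabla^i\big[\sigma_2 + \tfrac12(\mathrm{Tr}_g(P^2) - J^2)\big]$, where $J = \mathrm{Tr}_g P$; consequently, for any smooth $\phi$, $\int_M T^{ij}{}_{,j}\,\phi_i\, dvol = \int_M C^{kij}P_{kj}\,\phi_i\, dvol$ since $\sigma_2 + \tfrac12(\mathrm{Tr}_g(P^2) - J^2) = 0$ identically. -/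

import Mathlib

open Matrix MeasureTheory

/-- Partial derivative of a scalar function on `ℝⁿ` in the `i`-th coordinate
direction. -/
noncomputable def pd {n : ℕ} (f : EuclideanSpace ℝ (Fin n) → ℝ) (i : Fin n)
    (x : EuclideanSpace ℝ (Fin n)) : ℝ :=
  fderiv ℝ f x (EuclideanSpace.single i 1)

/-- The second Newton tensor `T = σ₂ g - σ₁ P + P²` of a field of symmetric
matrices `P` (flat background metric), with `σ₁ = Tr P = J`,
`σ₂ = (1/2)(J² - Tr(P²))`. -/
noncomputable def newtonT {n : ℕ}
    (P : EuclideanSpace ℝ (Fin n) → Matrix (Fin n) (Fin n) ℝ)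
    (x : EuclideanSpace ℝ (Fin n)) : Matrix (Fin n) (Fin n) ℝ :=
  ((1 / 2 : ℝ) * ((P x).trace ^ 2 - (P x * P x).trace)) • (1 : Matrix (Fin n) (Fin n) ℝ)
    - (P x).trace • P x + P x * P x

section Helpers

variable {n : ℕ} {f g : EuclideanSpace ℝ (Fin n) → ℝ} {i : Fin n}
  {x : EuclideanSpace ℝ (Fin n)}

lemma pd_add (hf : DifferentiableAt ℝ f x) (hg : DifferentiableAt ℝ g x) :
    pd (fun y => f y + g y) i x = pd f i x + pd g i x := by
  simp [pd, fderiv_fun_add hf hg]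

lemma pd_sub (hf : DifferentiableAt ℝ f x) (hg : DifferentiableAt ℝ g x) :
    pd (fun y => f y - g y) i x = pd f i x - pd g i x := by
  simp [pd, fderiv_fun_sub hf hg]

lemma pd_mul (hf : DifferentiableAt ℝ f x) (hg : DifferentiableAt ℝ g x) :
    pd (fun y => f y * g y) i x = f x * pd g i x + g x * pd f i x := by
  simp [pd, fderiv_fun_mul hf hg]

lemma pd_const (c : ℝ) : pd (fun _ => c) i x = 0 := by simp [pd]

lemma pd_const_mul (c : ℝ) (hf : DifferentiableAt ℝ f x) :
    pd (fun y => c * f y) i x = c * pd f i x := by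
  simp [pd, fderiv_const_mul hf c]

lemma pd_sum {ι : Type*} (s : Finset ι) (F : ι → EuclideanSpace ℝ (Fin n) → ℝ)
    (h : ∀ a ∈ s, DifferentiableAt ℝ (F a) x) :
    pd (fun y => ∑ a ∈ s, F a y) i x = ∑ a ∈ s, pd (F a) i x := by
  simp only [pd, fderiv_fun_sum h, ContinuousLinearMap.sum_apply]

end Helpers

lemma newton_pointwise (n : ℕ)
    (P : EuclideanSpace ℝ (Fin n) → Matrix (Fin n) (Fin n) ℝ)
    (hsym : ∀ x, (P x).IsSymm)
    (hsm : ∀ i j, ContDiff ℝ (⊤ : ℕ∞) (fun x => P x i j))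
    (hBianchi : ∀ x i, ∑ j, pd (fun y => P y i j) j x
        = pd (fun y => (P y).trace) i x) :
    ∀ x i, ∑ j, pd (fun y => newtonT P y i j) j x
        = ∑ k, ∑ j, (pd (fun y => P y k i) j x - pd (fun y => P y k j) i x) * P x k j := by
  intro x i
  -- basic differentiability
  have hd : ∀ a b (z : EuclideanSpace ℝ (Fin n)),
      DifferentiableAt ℝ (fun y => P y a b) z :=
    fun a b z => ((hsm a b).differentiable (by simp)) z
  -- symmetry, as functions
  have hfs : ∀ a b : Fin n, (fun y => P y a b) = (fun y => P y b a) :=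
    fun a b => funext fun y => (hsym y).apply b a
  set J : EuclideanSpace ℝ (Fin n) → ℝ := fun y => ∑ k, P y k k with hJdef
  have hJeq : (fun y => (P y).trace) = J := by
    funext y; simp [Matrix.trace, Matrix.diag, hJdef]
  have hJd : ∀ z, DifferentiableAt ℝ J z := fun z =>
    DifferentiableAt.fun_sum (fun k _ => hd k k z)
  set Q : EuclideanSpace ℝ (Fin n) → ℝ := fun y => ∑ a, ∑ b, P y a b * P y b a with hQdef
  have hQd : ∀ z, DifferentiableAt ℝ Q z := fun z =>
    DifferentiableAt.fun_sum fun a _ => DifferentiableAt.fun_sum fun b _ =>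
      (hd a b z).mul (hd b a z)
  set σ : EuclideanSpace ℝ (Fin n) → ℝ := fun y => (1/2 : ℝ) * (J y * J y - Q y) with hσdef
  have hσd : ∀ z, DifferentiableAt ℝ σ z := fun z =>
    (((hJd z).mul (hJd z)).sub (hQd z)).const_mul _
  -- rewrite the Newton tensor entries
  have hNT : ∀ j : Fin n, (fun y => newtonT P y i j) =
      fun y => σ y * (if i = j then (1:ℝ) else 0)
        - J y * P y i j + ∑ k, P y i k * P y k j := by
    intro j; funext y
    simp [newtonT, Matrix.sub_apply, Matrix.add_apply, Matrix.smul_apply,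
      Matrix.one_apply, Matrix.mul_apply, Matrix.trace, Matrix.diag,
      smul_eq_mul, hσdef, hJdef, hQdef, sq, mul_comm]
  -- Bianchi in terms of J
  have hB : ∀ k : Fin n, ∑ j, pd (fun y => P y k j) j x = pd J k x := by
    intro k; rw [← hJeq]; exact hBianchi x k
  -- compute pd of each entry of the Newton tensor
  have hentry : ∀ j : Fin n, pd (fun y => newtonT P y i j) j x =
      pd σ j x * (if i = j then (1:ℝ) else 0)
        - (J x * pd (fun y => P y i j) j x + P x i j * pd J j x)
        + ∑ k, (P x i k * pd (fun y => P y k j) j x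
                + P x k j * pd (fun y => P y i k) j x) := by
    intro j
    rw [hNT j]
    have h1 : pd (fun y => σ y * (if i = j then (1:ℝ) else 0)) j x
        = pd σ j x * (if i = j then (1:ℝ) else 0) := by
      by_cases h : i = j
      · simp [h]
      · simp [h, pd_const]
    have hd1 : DifferentiableAt ℝ (fun y => σ y * (if i = j then (1:ℝ) else 0)) x :=
      (hσd x).mul (differentiableAt_const _)
    have hd2 : DifferentiableAt ℝ (fun y => J y * P y i j) x := (hJd x).mul (hd i j x)
    have hd3 : DifferentiableAt ℝ (fun y => ∑ k, P y i k * P y k j) x :=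
      DifferentiableAt.fun_sum fun k _ => (hd i k x).mul (hd k j x)
    rw [pd_add (hd1.fun_sub hd2) hd3, pd_sub hd1 hd2, h1,
      pd_mul (hJd x) (hd i j x),
      pd_sum Finset.univ (fun k y => P y i k * P y k j)
        (fun k _ => (hd i k x).mul (hd k j x))]
    congr 1
    exact Finset.sum_congr rfl fun k _ => pd_mul (hd i k x) (hd k j x)
  -- sum of the delta term
  have hdelta : ∑ j, pd σ j x * (if i = j then (1:ℝ) else 0) = pd σ i x := by
    rw [Finset.sum_eq_single i]
    · simp
    · intro b _ hb; simp [Ne.symm hb]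
    · simp
  -- value of pd σ
  have hσval : pd σ i x = (1/2 : ℝ) * (J x * pd J i x + J x * pd J i x
      - ∑ a, ∑ b, (P x a b * pd (fun y => P y b a) i x
                   + P x b a * pd (fun y => P y a b) i x)) := by
    rw [hσdef]
    rw [pd_const_mul _ (((hJd x).fun_mul (hJd x)).fun_sub (hQd x)),
      pd_sub ((hJd x).fun_mul (hJd x)) (hQd x), pd_mul (hJd x) (hJd x)]
    congr 2
    rw [hQdef]
    rw [pd_sum Finset.univ (fun a y => ∑ b, P y a b * P y b a)
      (fun a _ => DifferentiableAt.fun_sum fun b _ => (hd a b x).mul (hd b a x))]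
    refine Finset.sum_congr rfl fun a _ => ?_
    rw [pd_sum Finset.univ (fun b y => P y a b * P y b a)
      (fun b _ => (hd a b x).mul (hd b a x))]
    exact Finset.sum_congr rfl fun b _ => pd_mul (hd a b x) (hd b a x)
  -- now assemble
  calc ∑ j, pd (fun y => newtonT P y i j) j x
      = ∑ j, (pd σ j x * (if i = j then (1:ℝ) else 0)
        - (J x * pd (fun y => P y i j) j x + P x i j * pd J j x)
        + ∑ k, (P x i k * pd (fun y => P y k j) j x
                + P x k j * pd (fun y => P y i k) j x)) :=
        Finset.sum_congr rfl fun j _ => hentry j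
    _ = pd σ i x
        - (J x * (∑ j, pd (fun y => P y i j) j x) + ∑ j, P x i j * pd J j x)
        + (∑ k, P x i k * (∑ j, pd (fun y => P y k j) j x)
           + ∑ j, ∑ k, P x k j * pd (fun y => P y i k) j x) := by
        rw [Finset.sum_add_distrib, Finset.sum_sub_distrib, hdelta,
          Finset.sum_add_distrib, Finset.mul_sum]
        congr 1
        simp only [Finset.sum_add_distrib]
        congr 1
        rw [Finset.sum_comm]
        exact Finset.sum_congr rfl fun k _ => (Finset.mul_sum _ _ _).symm
    _ = ∑ k, ∑ j, (pd (fun y => P y k i) j x - pd (fun y => P y k j) i x) * P x k j := by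
        rw [hσval, hB i]
        rw [show (∑ j, P x i j * pd J j x) = ∑ k, P x i k * pd J k x from rfl]
        rw [show (∑ k, P x i k * (∑ j, pd (fun y => P y k j) j x))
            = ∑ k, P x i k * pd J k x from Finset.sum_congr rfl fun k _ => by rw [hB k]]
        -- normalize symmetric entries/derivatives
        have e1 : ∀ a b : Fin n, pd (fun y => P y b a) i x = pd (fun y => P y a b) i x := by
          intro a b; rw [hfs b a]
        have e2 : ∀ a b : Fin n, P x b a = P x a b := fun a b => (hsym x).apply a b
        have hsum1 : (∑ a, ∑ b, (P x a b * pd (fun y => P y b a) i x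
              + P x b a * pd (fun y => P y a b) i x))
            = 2 * ∑ a, ∑ b, P x a b * pd (fun y => P y a b) i x := by
          rw [Finset.mul_sum]
          refine Finset.sum_congr rfl fun a _ => ?_
          rw [Finset.mul_sum]
          refine Finset.sum_congr rfl fun b _ => ?_
          rw [e1 a b, e2 a b]; ring
        rw [hsum1]
        have hsum2 : (∑ j, ∑ k, P x k j * pd (fun y => P y i k) j x)
            = ∑ k, ∑ j, P x k j * pd (fun y => P y k i) j x := by
          rw [Finset.sum_comm]
          exact Finset.sum_congr rfl fun k _ => Finset.sum_congr rfl fun j _ => by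
            rw [hfs i k]
        rw [hsum2]
        have hRHS : (∑ k, ∑ j, (pd (fun y => P y k i) j x
              - pd (fun y => P y k j) i x) * P x k j)
            = (∑ k, ∑ j, P x k j * pd (fun y => P y k i) j x)
              - ∑ k, ∑ j, P x k j * pd (fun y => P y k j) i x := by
          rw [← Finset.sum_sub_distrib]
          refine Finset.sum_congr rfl fun k _ => ?_
          rw [← Finset.sum_sub_distrib]
          exact Finset.sum_congr rfl fun j _ => by ring
        rw [hRHS]
        ring

/-- flat-coordinate form: given the contracted second Bianchi identity
`∑_j ∂_j P_{ij} = ∂_i J`, the divergence of the Newton tensor satisfies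
`T^{ij}{}_{,j} = C^{kij} P_{kj}` (the gradient term `∇^i[σ₂ + (1/2)(Tr P² - J²)]`
vanishing identically since `σ₂ = (1/2)(J² - Tr P²)`), where
`C_{kij} = ∂_j P_{ki} - ∂_i P_{kj}` is the Cotton tensor; consequently
`∫ T^{ij}{}_{,j} φ_i dvol = ∫ C^{kij} P_{kj} φ_i dvol` for any smooth `φ`. -/
theorem newton_tensor_divergence (n : ℕ) (μ : Measure (EuclideanSpace ℝ (Fin n)))
    [IsFiniteMeasure μ]
    (P : EuclideanSpace ℝ (Fin n) → Matrix (Fin n) (Fin n) ℝ)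
    (hsym : ∀ x, (P x).IsSymm)
    (hsm : ∀ i j, ContDiff ℝ (⊤ : ℕ∞) (fun x => P x i j))
    (φ : EuclideanSpace ℝ (Fin n) → ℝ) (hφ : ContDiff ℝ (⊤ : ℕ∞) φ)
    (hBianchi : ∀ x i, ∑ j, pd (fun y => P y i j) j x
        = pd (fun y => (P y).trace) i x) :
    (∀ x i, ∑ j, pd (fun y => newtonT P y i j) j x
        = ∑ k, ∑ j, (pd (fun y => P y k i) j x - pd (fun y => P y k j) i x) * P x k j)
    ∧ ∫ x, (∑ i, (∑ j, pd (fun y => newtonT P y i j) j x) * pd φ i x) ∂μ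
        = ∫ x, (∑ i, (∑ k, ∑ j,
            (pd (fun y => P y k i) j x - pd (fun y => P y k j) i x) * P x k j)
              * pd φ i x) ∂μ := by
  have h := newton_pointwise n P hsym hsm hBianchi
  refine ⟨h, ?_⟩
  congr 1
  funext x
  exact Finset.sum_congr rfl fun i _ => by rw [h x i]
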